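/- arXiv:1712.05508 — 6 statements merged into one kernel-verified Lean document; each statement's English description precedes it below -/
import Mathlib

section
/- Let k ≥ 1 be an integer and let f_k : ℝ → ℝ be defined by f_k(θ) = θ^{k+1}(π−θ)^{k+1}. Then there exists a constant ε with 0 < ε < 1 such that: (i) for all θ with 0 ≤ θ ≤ ε, f_k^{(k)}(θ) ≥ (π^{k+1}·(k+1)!/2)·θ; (ii) if k is even, then for all θ with π−ε ≤ θ ≤ π, f_k^{(k)}(θ) ≥ (π^{k+1}·(k+1)!/2)·(π−θ); (iii) if k is odd, then for all θ with π−ε ≤ θ ≤ π, f_k^{(k)}(θ) ≤ −(π^{k+1}·(k+1)!/2)·(π−θ). -/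
open Real Polynomial Finset

private lemma iteratedDeriv_polynomial_eval (p : Polynomial ℝ) (n : ℕ) :
    iteratedDeriv n (fun x => p.eval x) = fun x => ((Polynomial.derivative)^[n] p).eval x := by
  induction n with
  | zero => simp
  | succ n ih =>
    rw [iteratedDeriv_succ, ih, Function.iterate_succ_apply']
    funext x
    exact Polynomial.deriv _

theorem circle_body_kth_derivative_linear_near_endpoints
    (k : ℕ) (hk : 1 ≤ k) (f : ℝ → ℝ)
    (hf : ∀ θ : ℝ, f θ = θ ^ (k + 1) * (Real.pi - θ) ^ (k + 1)) :
    ∃ ε : ℝ, 0 < ε ∧ ε < 1 ∧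
      (∀ θ : ℝ, 0 ≤ θ → θ ≤ ε →
        iteratedDeriv k f θ ≥ Real.pi ^ (k + 1) * (Nat.factorial (k + 1) : ℝ) / 2 * θ) ∧
      (Even k → ∀ θ : ℝ, Real.pi - ε ≤ θ → θ ≤ Real.pi →
        iteratedDeriv k f θ ≥
          Real.pi ^ (k + 1) * (Nat.factorial (k + 1) : ℝ) / 2 * (Real.pi - θ)) ∧
      (Odd k → ∀ θ : ℝ, Real.pi - ε ≤ θ → θ ≤ Real.pi →
        iteratedDeriv k f θ ≤
          -(Real.pi ^ (k + 1) * (Nat.factorial (k + 1) : ℝ) / 2 * (Real.pi - θ))) := by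
  set p : Polynomial ℝ := X ^ (k + 1) * (C Real.pi - X) ^ (k + 1) with hp
  have hfp : f = fun θ => p.eval θ := by
    funext θ; rw [hf, hp]; simp
  set q : Polynomial ℝ := (Polynomial.derivative)^[k] p with hq
  have hiter : ∀ θ : ℝ, iteratedDeriv k f θ = q.eval θ := by
    intro θ
    rw [hfp, iteratedDeriv_polynomial_eval]
  -- coefficient computations
  have hc0 : q.coeff 0 = 0 := by
    rw [hq, Polynomial.coeff_iterate_derivative, hp, zero_add,
      Polynomial.coeff_X_pow_mul']
    simp
  set c : ℝ := Real.pi ^ (k + 1) * (Nat.factorial (k + 1) : ℝ) with hC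
  have hc1 : q.coeff 1 = c := by
    rw [hq, Polynomial.coeff_iterate_derivative]
    have h1k : 1 + k = 0 + (k + 1) := by omega
    have hpc : p.coeff (1 + k) = Real.pi ^ (k + 1) := by
      rw [hp, h1k, Polynomial.coeff_X_pow_mul]
      rw [Polynomial.coeff_zero_eq_eval_zero]
      simp
    have hdf : (1 + k).descFactorial k = Nat.factorial (k + 1) := by
      rw [add_comm, Nat.descFactorial_eq_factorial_mul_choose,
        Nat.choose_succ_self_right, Nat.factorial_succ, mul_comm]
    rw [hpc, hdf, nsmul_eq_mul, hC]
    ring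
  have hcpos : 0 < c := by
    rw [hC]
    positivity
  set D : ℕ := q.natDegree + 1 with hD
  set M : ℝ := ∑ m ∈ Finset.range D, |q.coeff m| with hM
  have hM0 : 0 ≤ M := Finset.sum_nonneg fun m _ => abs_nonneg _
  set ε : ℝ := min (1 / 2) (c / (2 * (M + 1))) with hε
  have hε0 : 0 < ε := by
    apply lt_min (by norm_num)
    positivity
  have hεhalf : ε ≤ 1 / 2 := min_le_left _ _
  have hε2 : ε ≤ c / (2 * (M + 1)) := min_le_right _ _
  have hε1 : ε < 1 := lt_of_le_of_lt hεhalf (by norm_num)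
  -- key estimate near 0
  have key : ∀ θ : ℝ, 0 ≤ θ → θ ≤ ε → c / 2 * θ ≤ q.eval θ := by
    intro θ h0 hθε
    have hθ1 : θ ≤ 1 := le_trans hθε (by linarith)
    have hD2 : 2 ≤ D := by
      have h1 : q.coeff 1 ≠ 0 := by rw [hc1]; exact ne_of_gt hcpos
      have h2 := Polynomial.le_natDegree_of_ne_zero h1
      omega
    have heval : q.eval θ = ∑ m ∈ Finset.range D, q.coeff m * θ ^ m :=
      Polynomial.eval_eq_sum_range θ
    have hsplit : ∑ m ∈ Finset.range D, q.coeff m * θ ^ m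
        = (q.coeff 0 * θ ^ 0 + q.coeff 1 * θ ^ 1)
          + ∑ m ∈ Finset.Ico 2 D, q.coeff m * θ ^ m := by
      rw [Finset.range_eq_Ico,
        ← Finset.sum_Ico_consecutive _ (Nat.zero_le 2) hD2]
      congr 1
      rw [← Finset.range_eq_Ico]
      simp [Finset.sum_range_succ]
    have htail1 : ∀ m ∈ Finset.Ico 2 D, -(|q.coeff m| * θ ^ 2) ≤ q.coeff m * θ ^ m := by
      intro m hm
      obtain ⟨h2m, hmD⟩ := Finset.mem_Ico.mp hm
      have hpow : θ ^ m ≤ θ ^ 2 := pow_le_pow_of_le_one h0 hθ1 h2m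
      have habs : |q.coeff m * θ ^ m| ≤ |q.coeff m| * θ ^ 2 := by
        rw [abs_mul, abs_of_nonneg (pow_nonneg h0 m)]
        exact mul_le_mul_of_nonneg_left hpow (abs_nonneg _)
      have := neg_abs_le (q.coeff m * θ ^ m)
      linarith
    have htail2 : ∑ m ∈ Finset.Ico 2 D, -(|q.coeff m| * θ ^ 2)
        ≤ ∑ m ∈ Finset.Ico 2 D, q.coeff m * θ ^ m := Finset.sum_le_sum htail1
    have htail3 : ∑ m ∈ Finset.Ico 2 D, -(|q.coeff m| * θ ^ 2)
        = -((∑ m ∈ Finset.Ico 2 D, |q.coeff m|) * θ ^ 2) := by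
      rw [Finset.sum_mul, ← Finset.sum_neg_distrib]
    have hsub : ∑ m ∈ Finset.Ico 2 D, |q.coeff m| ≤ M := by
      rw [hM, Finset.range_eq_Ico]
      exact Finset.sum_le_sum_of_subset_of_nonneg
        (Finset.Ico_subset_Ico (Nat.zero_le 2) le_rfl)
        (fun m _ _ => abs_nonneg _)
    have htail : -(M * θ ^ 2) ≤ ∑ m ∈ Finset.Ico 2 D, q.coeff m * θ ^ m := by
      have hθ2 : 0 ≤ θ ^ 2 := sq_nonneg θ
      nlinarith
    have hMθ : M * θ ≤ c / 2 := by
      have h1 : M * θ ≤ M * (c / (2 * (M + 1))) :=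
        mul_le_mul_of_nonneg_left (hθε.trans hε2) hM0
      have hden : (0 : ℝ) < 2 * (M + 1) := by linarith
      have h2 : M * (c / (2 * (M + 1))) ≤ c / 2 := by
        rw [← mul_div_assoc, div_le_div_iff₀ hden (by norm_num : (0:ℝ) < 2)]
        nlinarith
      linarith
    have hfinal : q.eval θ ≥ c * θ - M * θ ^ 2 := by
      rw [heval, hsplit, hc0, hc1]
      simp only [zero_mul, pow_one, zero_add]
      linarith
    nlinarith [mul_nonneg h0 (sub_nonneg.mpr hMθ)]
  -- symmetry
  have hsym : ∀ u : ℝ, iteratedDeriv k f u = (-1 : ℝ) ^ k * iteratedDeriv k f (Real.pi - u) := by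
    intro u
    have h1 : f = fun x => f (Real.pi + -x) := by
      funext x
      rw [hf, hf]
      ring
    have h2 := iteratedDeriv_comp_neg k (fun z => f (Real.pi + z)) u
    have h3 := congrFun (iteratedDeriv_comp_const_add k f Real.pi) (-u)
    rw [h3, smul_eq_mul] at h2
    calc iteratedDeriv k f u = iteratedDeriv k (fun x => f (Real.pi + -x)) u := by rw [← h1]
      _ = (-1 : ℝ) ^ k * iteratedDeriv k f (Real.pi + -u) := h2
      _ = (-1 : ℝ) ^ k * iteratedDeriv k f (Real.pi - u) := by rw [← sub_eq_add_neg]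
  refine ⟨ε, hε0, hε1, ?_, ?_, ?_⟩
  · intro θ h0 hθ
    rw [ge_iff_le, hiter]
    have := key θ h0 hθ
    calc Real.pi ^ (k + 1) * (Nat.factorial (k + 1) : ℝ) / 2 * θ = c / 2 * θ := by
          rw [hC]
      _ ≤ q.eval θ := this
  · intro hke θ h1 h2
    have hs := hsym (Real.pi - θ)
    rw [sub_sub_cancel] at hs
    rw [hke.neg_one_pow, one_mul] at hs
    rw [ge_iff_le, ← hs, hiter]
    have := key (Real.pi - θ) (by linarith) (by linarith)
    calc Real.pi ^ (k + 1) * (Nat.factorial (k + 1) : ℝ) / 2 * (Real.pi - θ)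
        = c / 2 * (Real.pi - θ) := by rw [hC]
      _ ≤ q.eval (Real.pi - θ) := this
  · intro hko θ h1 h2
    have hs := hsym (Real.pi - θ)
    rw [sub_sub_cancel] at hs
    rw [hko.neg_one_pow, neg_one_mul] at hs
    have hkey := key (Real.pi - θ) (by linarith) (by linarith)
    rw [← hiter] at hkey
    rw [hs] at hkey
    have : c / 2 * (Real.pi - θ) ≤ -iteratedDeriv k f θ := hkey
    rw [hC] at this
    linarith
end

section
/- Let k ≥ 1 be an integer and let f_k : ℝ → ℝ be defined by f_k(θ) = θ^{k+1}(π−θ)^{k+1}. Then the function θ ↦ f_k^{(k)}(θ)/θ tends to (k+1)!·π^{k+1} as θ → 0 with θ ≠ 0, and the function θ ↦ (−1)^k·f_k^{(k)}(θ)/(π−θ) tends to (k+1)!·π^{k+1} as θ → π with θ ≠ π. -/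
open Filter Topology Polynomial

private lemma iteratedDeriv_poly (P : ℝ[X]) (n : ℕ) :
    iteratedDeriv n (fun x => P.eval x) = fun x => (derivative^[n] P).eval x := by
  induction n with
  | zero => rfl
  | succ n ih =>
    rw [iteratedDeriv_succ, ih]
    funext x
    rw [Polynomial.deriv, Function.iterate_succ_apply']

private lemma eval_iter_deriv (P : ℝ[X]) (r : ℝ) (n : ℕ) :
    (derivative^[n] P).eval r = (n.factorial : ℝ) * (taylor r P).coeff n := by
  rw [taylor_coeff, ← factorial_smul_hasseDeriv]
  simp [smul_eval]

theorem kth_derivative_limits_at_endpoints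
    (k : ℕ) (hk : 1 ≤ k) (f : ℝ → ℝ)
    (hf : ∀ θ : ℝ, f θ = θ ^ (k + 1) * (Real.pi - θ) ^ (k + 1)) :
    Tendsto (fun θ : ℝ => iteratedDeriv k f θ / θ) (𝓝[≠] (0 : ℝ))
        (𝓝 ((Nat.factorial (k + 1) : ℝ) * Real.pi ^ (k + 1))) ∧
      Tendsto (fun θ : ℝ => (-1 : ℝ) ^ k * iteratedDeriv k f θ / (Real.pi - θ))
        (𝓝[≠] Real.pi)
        (𝓝 ((Nat.factorial (k + 1) : ℝ) * Real.pi ^ (k + 1))) := by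
  set π := Real.pi
  set P : ℝ[X] := X ^ (k + 1) * (C π - X) ^ (k + 1) with hP
  have hfP : f = fun x => P.eval x := by
    funext x; simp [hf, hP]
  set g : ℝ[X] := derivative^[k] P with hg
  have hid : iteratedDeriv k f = fun x => g.eval x := by
    rw [hfP, iteratedDeriv_poly]
  have hgd : g.derivative = derivative^[k + 1] P :=
    (Function.iterate_succ_apply' derivative k P).symm
  -- coefficients of P
  have hcoeffP : ∀ n, P.coeff n = ((C π - X : ℝ[X]) ^ (k + 1)).coeff (n - (k+1))
      * (if k + 1 ≤ n then 1 else 0) := by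
    intro n
    rw [hP, mul_comm, coeff_mul_X_pow']
    split <;> simp
  have hPk : P.coeff k = 0 := by
    rw [hcoeffP]; simp [Nat.lt_succ_self, Nat.not_succ_le_self]
  have hPk1 : P.coeff (k + 1) = π ^ (k + 1) := by
    rw [hcoeffP]
    simp only [le_refl, if_true, Nat.sub_self, mul_one]
    have : ((C π - X : ℝ[X]) ^ (k + 1)).coeff 0 = ((C π - X : ℝ[X]) ^ (k + 1)).eval 0 := by
      simp [coeff_zero_eq_eval_zero]
    rw [this]; simp
  -- taylor at π
  have htaylor : taylor π P = ((-1 : ℝ[X]) ^ (k+1) * (X + C π) ^ (k + 1)) * X ^ (k + 1) := by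
    rw [taylor_apply, hP]
    simp only [mul_comp, pow_comp, X_comp, sub_comp, C_comp]
    ring
  have hTk : (taylor π P).coeff k = 0 := by
    rw [htaylor]
    rw [coeff_mul_X_pow']
    simp [Nat.not_succ_le_self]
  have hTk1 : (taylor π P).coeff (k + 1) = (-1 : ℝ) ^ (k + 1) * π ^ (k + 1) := by
    rw [htaylor, coeff_mul_X_pow']
    simp only [le_refl, if_true, Nat.sub_self]
    rw [coeff_zero_eq_eval_zero]
    simp
  -- evaluations
  have hg0 : g.eval 0 = 0 := by
    rw [hg, eval_iter_deriv]
    simp [hPk]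
  have hgπ : g.eval π = 0 := by
    rw [hg, eval_iter_deriv, hTk, mul_zero]
  have hgd0 : g.derivative.eval 0 = (Nat.factorial (k + 1) : ℝ) * π ^ (k + 1) := by
    rw [hgd, eval_iter_deriv]
    simp [hPk1]
  have hgdπ : g.derivative.eval π =
      (Nat.factorial (k + 1) : ℝ) * ((-1 : ℝ) ^ (k + 1) * π ^ (k + 1)) := by
    rw [hgd, eval_iter_deriv, hTk1]
  -- slopes
  have hd0 : HasDerivAt (fun x => g.eval x) ((Nat.factorial (k + 1) : ℝ) * π ^ (k + 1)) 0 := by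
    simpa [hgd0] using Polynomial.hasDerivAt g (0 : ℝ)
  have hdπ : HasDerivAt (fun x => g.eval x)
      ((Nat.factorial (k + 1) : ℝ) * ((-1 : ℝ) ^ (k + 1) * π ^ (k + 1))) π := by
    simpa [hgdπ] using Polynomial.hasDerivAt g π
  rw [hasDerivAt_iff_tendsto_slope] at hd0 hdπ
  constructor
  · refine hd0.congr' ?_
    filter_upwards [self_mem_nhdsWithin] with θ hθ
    rw [hid]
    simp [slope_def_field, hg0]
  · have := hdπ.const_mul ((-1 : ℝ) ^ (k + 1))
    have hsq : (-1 : ℝ) ^ (k + 1) * (-1 : ℝ) ^ (k + 1) = 1 := by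
      rw [← pow_add, ← two_mul, pow_mul]; norm_num
    have heq : (-1 : ℝ) ^ (k + 1) * ((Nat.factorial (k + 1) : ℝ) *
        ((-1 : ℝ) ^ (k + 1) * π ^ (k + 1))) = (Nat.factorial (k + 1) : ℝ) * π ^ (k + 1) := by
      calc (-1 : ℝ) ^ (k + 1) * ((Nat.factorial (k + 1) : ℝ) * ((-1 : ℝ) ^ (k + 1) * π ^ (k + 1)))
          = ((-1 : ℝ) ^ (k + 1) * (-1 : ℝ) ^ (k + 1)) *
            ((Nat.factorial (k + 1) : ℝ) * π ^ (k + 1)) := by ring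
        _ = (Nat.factorial (k + 1) : ℝ) * π ^ (k + 1) := by rw [hsq, one_mul]
    rw [heq] at this
    refine this.congr' ?_
    filter_upwards [self_mem_nhdsWithin] with θ (hθ : θ ≠ π)
    rw [hid]
    have hsub : θ - π ≠ 0 := sub_ne_zero.mpr hθ
    have hsub2 : π - θ ≠ 0 := sub_ne_zero.mpr (Ne.symm hθ)
    simp only [slope_def_field, hgπ, sub_zero]
    field_simp
    ring
end

section
/- Let n ≥ 2 and k ≥ 1 be integers, and let f : ℝ^n → ℝ be an infinitely differentiable function satisfying (a) f(x) = (1 − ‖x‖)^{k+1} for all x with 1/2 ≤ ‖x‖ ≤ 3/2, and (b) f(x) > 0 for all x with ‖x‖ < 1. Then there exist constants ε and C with 0 < ε < 1/2 < C such that for every i ∈ {1,…,n} and every x ∈ ℝ^n with 1−ε ≤ ‖x‖ ≤ 1 and |x_i| > 1/(4√n) the following hold: if k is even, then (1−‖x‖)/C ≤ ∂^k f/∂x_i^k(x) ≤ C·(1−‖x‖); if k is odd and x_i < 0, then (1−‖x‖)/C ≤ ∂^k f/∂x_i^k(x) ≤ C·(1−‖x‖); if k is odd and x_i > 0, then (1−‖x‖)/C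 ≤ −∂^k f/∂x_i^k(x) ≤ C·(1−‖x‖). -/
open Real Filter


noncomputable def pd (F : ℝ × ℝ → ℝ) : ℝ × ℝ → ℝ := fun p => deriv (fun t => F (p.1, t)) p.2

lemma pd_iterate (F : ℝ × ℝ → ℝ) (m : ℕ) (s t : ℝ) :
    iteratedDeriv m (fun τ => F (s, τ)) t = (pd^[m] F) (s, t) := by
  induction m generalizing F with
  | zero => simp
  | succ m ih =>
      rw [iteratedDeriv_succ']
      have h1 : (deriv fun τ => F (s, τ)) = fun τ => pd F (s, τ) := rfl
      rw [h1, ih (pd F), Function.iterate_succ]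
      rfl

lemma hasDerivAt_slice {F : ℝ × ℝ → ℝ} {p : ℝ × ℝ} (hF : DifferentiableAt ℝ F p) :
    HasDerivAt (fun t => F (p.1, t)) (fderiv ℝ F p (0, 1)) p.2 := by
  have hc : HasDerivAt (fun t : ℝ => ((p.1, t) : ℝ × ℝ)) (0, 1) p.2 :=
    (hasDerivAt_const p.2 p.1).prodMk (hasDerivAt_id p.2)
  have := hF.hasFDerivAt.comp_hasDerivAt (x := p.2) (by simpa using hc)
  exact this

lemma pd_eq_fderiv {F : ℝ × ℝ → ℝ} {p : ℝ × ℝ} (hF : DifferentiableAt ℝ F p) :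
    pd F p = fderiv ℝ F p (0, 1) := (hasDerivAt_slice hF).deriv

lemma pd_contDiffOn {Ω : Set (ℝ × ℝ)} (hΩ : IsOpen Ω) {F : ℝ × ℝ → ℝ}
    (hF : ContDiffOn ℝ (⊤ : ℕ∞) F Ω) : ContDiffOn ℝ (⊤ : ℕ∞) (pd F) Ω := by
  have hfd : ContDiffOn ℝ (⊤ : ℕ∞) (fderiv ℝ F) Ω := hF.fderiv_of_isOpen hΩ (by simp)
  have h2 : ContDiffOn ℝ (⊤ : ℕ∞) (fun q => (fderiv ℝ F q) (0, 1)) Ω :=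
    (ContinuousLinearMap.apply ℝ ℝ ((0 : ℝ), (1 : ℝ))).contDiff.comp_contDiffOn hfd
  refine h2.congr fun p hp => ?_
  exact pd_eq_fderiv ((hF.contDiffAt (hΩ.mem_nhds hp)).differentiableAt (by simp))

lemma slice_mem_nhds {Ω : Set (ℝ × ℝ)} (hΩ : IsOpen Ω) {p : ℝ × ℝ} (hp : p ∈ Ω) :
    {t : ℝ | (p.1, t) ∈ Ω} ∈ nhds p.2 := by
  have hc : Continuous fun t : ℝ => ((p.1, t) : ℝ × ℝ) := by fun_prop
  have : p.2 ∈ {t : ℝ | (p.1, t) ∈ Ω} := by simpa using hp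
  exact (hΩ.preimage hc).mem_nhds this

lemma pd_congr {Ω : Set (ℝ × ℝ)} (hΩ : IsOpen Ω) {F G : ℝ × ℝ → ℝ}
    (h : ∀ q ∈ Ω, F q = G q) {p : ℝ × ℝ} (hp : p ∈ Ω) : pd F p = pd G p := by
  apply Filter.EventuallyEq.deriv_eq
  filter_upwards [slice_mem_nhds hΩ hp] with t ht using h _ ht

lemma slice_contDiffAt {Ω : Set (ℝ × ℝ)} (hΩ : IsOpen Ω) {F : ℝ × ℝ → ℝ}
    (hF : ContDiffOn ℝ (⊤ : ℕ∞) F Ω) {p : ℝ × ℝ} (hp : p ∈ Ω) :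
    ContDiffAt ℝ (⊤ : ℕ∞) (fun t => F (p.1, t)) p.2 := by
  have h1 : ContDiffAt ℝ (⊤ : ℕ∞) F p := hF.contDiffAt (hΩ.mem_nhds hp)
  have h2 : ContDiffAt ℝ (⊤ : ℕ∞) (fun t : ℝ => ((p.1, t) : ℝ × ℝ)) p.2 := by fun_prop
  have := h1.comp (x := p.2) (f := fun t : ℝ => ((p.1, t) : ℝ × ℝ)) (by simpa using h2)
  exact this

lemma slice_hasDerivAt {Ω : Set (ℝ × ℝ)} (hΩ : IsOpen Ω) {F : ℝ × ℝ → ℝ}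
    (hF : ContDiffOn ℝ (⊤ : ℕ∞) F Ω) {p : ℝ × ℝ} (hp : p ∈ Ω) :
    HasDerivAt (fun t => F (p.1, t)) (pd F p) p.2 :=
  ((slice_contDiffAt hΩ hF hp).differentiableAt (by simp)).hasDerivAt

noncomputable def Phi : ℝ × ℝ → ℝ := fun p => 1 - Real.sqrt (p.1 ^ 2 + p.2 ^ 2)

def Om : Set (ℝ × ℝ) := {p | p.1 ^ 2 + p.2 ^ 2 ≠ 0}

lemma Om_open : IsOpen Om :=
  isOpen_ne.preimage (by fun_prop : Continuous fun p : ℝ × ℝ => p.1 ^ 2 + p.2 ^ 2)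

lemma Phi_contDiffOn : ContDiffOn ℝ (⊤ : ℕ∞) Phi Om := by
  intro p hp
  apply ContDiffAt.contDiffWithinAt
  have h1 : ContDiffAt ℝ (⊤ : ℕ∞) (fun p : ℝ × ℝ => p.1 ^ 2 + p.2 ^ 2) p := by fun_prop
  have h2 : ContDiffAt ℝ (⊤ : ℕ∞) Real.sqrt (p.1 ^ 2 + p.2 ^ 2) := Real.contDiffAt_sqrt hp
  exact contDiffAt_const.sub (h2.comp p h1)

/-- coefficient (k+1)k(k-1)...(k+2-m) -/
def cc (k : ℕ) : ℕ → ℕ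
  | 0 => 1
  | m + 1 => (k + 1 - m) * cc k m

lemma cc_pos (k m : ℕ) (h : m ≤ k) : 0 < cc k m := by
  induction m with
  | zero => simp [cc]
  | succ m ih =>
      have h1 : m ≤ k := by omega
      have : 0 < k + 1 - m := by omega
      exact Nat.mul_pos this (ih h1)

lemma structural (k : ℕ) (m : ℕ) (hm : m ≤ k) :
    ∃ W : ℝ × ℝ → ℝ, ContDiffOn ℝ (⊤ : ℕ∞) W Om ∧
      ∀ p ∈ Om, (pd^[m] (fun q => Phi q ^ (k + 1))) p =
        Phi p ^ (k + 1 - m) * ((cc k m : ℝ) * (pd Phi p) ^ m + Phi p * W p) := by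
  induction m with
  | zero =>
      refine ⟨fun _ => 0, contDiffOn_const, fun p hp => ?_⟩
      simp [cc]
  | succ m ih =>
      obtain ⟨W, hW, hform⟩ := ih (by omega)
      -- V : the bracket
      set V : ℝ × ℝ → ℝ := fun q => (cc k m : ℝ) * (pd Phi q) ^ m + Phi q * W q with hV
      have hVs : ContDiffOn ℝ (⊤ : ℕ∞) V Om := by
        apply ContDiffOn.add
        · exact contDiffOn_const.mul ((pd_contDiffOn Om_open Phi_contDiffOn).pow m)
        · exact Phi_contDiffOn.mul hW
      refine ⟨fun q => (k + 1 - m : ℕ) * pd Phi q * W q + pd V q,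
        ?_, fun p hp => ?_⟩
      · apply ContDiffOn.add
        · exact (contDiffOn_const.mul (pd_contDiffOn Om_open Phi_contDiffOn)).mul hW
        · exact pd_contDiffOn Om_open hVs
      · have step1 : (pd^[m + 1] (fun q => Phi q ^ (k + 1))) p
            = pd (fun q => Phi q ^ (k + 1 - m) * V q) p := by
          rw [Function.iterate_succ_apply']
          exact pd_congr Om_open hform hp
        -- compute the pd of the product
        have hPhi := slice_hasDerivAt Om_open Phi_contDiffOn hp
        have hVd := slice_hasDerivAt Om_open hVs hp
        have hprod : HasDerivAt (fun t => Phi (p.1, t) ^ (k + 1 - m) * V (p.1, t))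
            (((k + 1 - m : ℕ) * Phi p ^ (k + 1 - m - 1) * pd Phi p) * V p
              + Phi p ^ (k + 1 - m) * pd V p) p.2 := by
          have := (hPhi.pow (k + 1 - m)).mul hVd
          exact this
        have step2 : pd (fun q => Phi q ^ (k + 1 - m) * V q) p
            = ((k + 1 - m : ℕ) * Phi p ^ (k + 1 - m - 1) * pd Phi p) * V p
              + Phi p ^ (k + 1 - m) * pd V p := hprod.deriv
        rw [step1, step2]
        -- algebra
        have e1 : k + 1 - m - 1 = k - m := by omega
        have e2 : k + 1 - m = (k - m) + 1 := by omega
        have e3 : k + 1 - (m + 1) = k - m := by omega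
        have e4 : (cc k (m + 1) : ℝ) = (k + 1 - m : ℕ) * (cc k m : ℝ) := by
          rw [cc]; push_cast; ring
        rw [e4, e1, e2, e3, hV]
        ring

lemma pd_Phi {p : ℝ × ℝ} (hp : p.1 ^ 2 + p.2 ^ 2 ≠ 0) :
    pd Phi p = -(p.2 / Real.sqrt (p.1 ^ 2 + p.2 ^ 2)) := by
  have h1 : HasDerivAt (fun t : ℝ => p.1 ^ 2 + t ^ 2) (2 * p.2) p.2 := by
    simpa using (hasDerivAt_pow 2 p.2).const_add (p.1 ^ 2)
  have h2 : HasDerivAt Real.sqrt (1 / (2 * Real.sqrt (p.1 ^ 2 + p.2 ^ 2))) (p.1 ^ 2 + p.2 ^ 2) :=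
    Real.hasDerivAt_sqrt hp
  have h3 := (h2.comp p.2 h1).const_sub 1
  have hsq : Real.sqrt (p.1 ^ 2 + p.2 ^ 2) ≠ 0 := by
    refine Real.sqrt_ne_zero'.mpr ?_
    rcases lt_or_eq_of_le (by positivity : (0:ℝ) ≤ p.1 ^ 2 + p.2 ^ 2) with h | h
    · exact h
    · exact absurd h.symm hp
  have h4 : HasDerivAt (fun t => Phi (p.1, t))
      (-(1 / (2 * Real.sqrt (p.1 ^ 2 + p.2 ^ 2)) * (2 * p.2))) p.2 := by
    simpa [Phi, Function.comp] using h3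
  rw [pd, h4.deriv]
  field_simp


lemma sum_sq_eq_norm_sq {n : ℕ} (x : EuclideanSpace ℝ (Fin n)) :
    ∑ j, ‖x j‖ ^ 2 = ‖x‖ ^ 2 := by
  rw [EuclideanSpace.norm_eq, Real.sq_sqrt (by positivity)]

lemma coord_sq_le {n : ℕ} (x : EuclideanSpace ℝ (Fin n)) (i : Fin n) :
    (x i) ^ 2 ≤ ‖x‖ ^ 2 := by
  rw [← sum_sq_eq_norm_sq]
  have := Finset.single_le_sum (f := fun j => ‖x j‖ ^ 2)
    (fun j _ => by positivity) (Finset.mem_univ i)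
  simpa [sq_abs] using this

lemma norm_update {n : ℕ} (x : EuclideanSpace ℝ (Fin n)) (i : Fin n) (τ : ℝ)
    (y : EuclideanSpace ℝ (Fin n)) (hy : ∀ j, y j = Function.update x i τ j) :
    ‖y‖ = Real.sqrt ((‖x‖ ^ 2 - (x i) ^ 2) + τ ^ 2) := by
  have hfun : (fun j => ‖y j‖ ^ 2)
      = Function.update (fun j => ‖x j‖ ^ 2) i (‖τ‖ ^ 2) := by
    funext j
    by_cases h : j = i <;> simp [hy, h, Function.update_apply]
  have key : ∑ j, ‖y j‖ ^ 2 = ‖x‖ ^ 2 - (x i) ^ 2 + τ ^ 2 :=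
  calc ∑ j, ‖y j‖ ^ 2
      = ∑ j, Function.update (fun j => ‖x j‖ ^ 2) i (‖τ‖ ^ 2) j := by rw [hfun]
    _ = ‖τ‖ ^ 2 + ∑ j ∈ Finset.univ \ {i}, ‖x j‖ ^ 2 :=
        Finset.sum_update_of_mem (Finset.mem_univ i) _ _
    _ = ‖τ‖ ^ 2 + (∑ j, ‖x j‖ ^ 2 - ‖x i‖ ^ 2) := by
        rw [Finset.sdiff_singleton_eq_erase,
          ← Finset.add_sum_erase Finset.univ _ (Finset.mem_univ i)]; ring
    _ = ‖x‖ ^ 2 - (x i) ^ 2 + τ ^ 2 := by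
        rw [sum_sq_eq_norm_sq]
        simp [Real.norm_eq_abs, sq_abs]
        ring

  rw [EuclideanSpace.norm_eq y, key]


lemma core_bounds {δ C cck u w e ε M' : ℝ} (hδ : 0 < δ) (hcck : 0 < cck)
    (hC : C = 2 / δ + cck + δ + 1)
    (hM' : 0 ≤ M') (hw : |w| ≤ M') (hu0 : 0 ≤ u) (huε : u ≤ ε) (hε0 : 0 ≤ ε)
    (hεδ : ε ≤ δ / (2 * (M' + 1)))
    (he1 : δ ≤ cck * e) (he2 : cck * e ≤ cck) :
    u / C ≤ u * (cck * e + u * w) ∧ u * (cck * e + u * w) ≤ C * u := by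
  have hC0 : 0 < C := by rw [hC]; positivity
  have h1 : |u * w| ≤ δ / 2 := by
    have i1 : |u * w| ≤ ε * M' := by
      rw [abs_mul, abs_of_nonneg hu0]
      exact mul_le_mul huε hw (abs_nonneg w) hε0
    have i2 : ε * M' ≤ δ / 2 := by
      have i3 : ε * M' ≤ δ / (2 * (M' + 1)) * M' := mul_le_mul_of_nonneg_right hεδ hM'
      have i4 : δ / (2 * (M' + 1)) * M' ≤ δ / 2 := by
        rw [div_mul_eq_mul_div, div_le_div_iff₀ (by positivity) (by norm_num)]
        nlinarith
      linarith
    linarith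
  obtain ⟨h1a, h1b⟩ := abs_le.mp h1
  have hA1 : δ / 2 ≤ cck * e + u * w := by linarith
  have hA2 : cck * e + u * w ≤ C := by
    have i8 : (0:ℝ) < 2 / δ := by positivity
    rw [hC]; linarith
  have hinv : 1 / C ≤ δ / 2 := by
    have i5 : 2 / δ ≤ C := by rw [hC]; have : (0:ℝ) < δ := hδ; linarith
    have i6 : (1:ℝ) / C ≤ 1 / (2 / δ) := one_div_le_one_div_of_le (by positivity) i5
    have i7 : (1:ℝ) / (2 / δ) = δ / 2 := by field_simp
    linarith
  constructor
  · calc u / C = u * (1 / C) := by ring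
      _ ≤ u * (δ / 2) := mul_le_mul_of_nonneg_left hinv hu0
      _ ≤ u * (cck * e + u * w) := mul_le_mul_of_nonneg_left hA1 hu0
  · calc u * (cck * e + u * w) ≤ u * C := mul_le_mul_of_nonneg_left hA2 hu0
      _ = C * u := mul_comm u C



set_option maxHeartbeats 2000000 in
theorem kth_partial_derivatives_approx_linear_near_sphere
    (n k : ℕ) (hn : 2 ≤ n) (hk : 1 ≤ k)
    (f : EuclideanSpace ℝ (Fin n) → ℝ) (hf : ContDiff ℝ (⊤ : ℕ∞) f)
    (ha : ∀ x : EuclideanSpace ℝ (Fin n), 1 / 2 ≤ ‖x‖ → ‖x‖ ≤ 3 / 2 →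
      f x = (1 - ‖x‖) ^ (k + 1))
    (hb : ∀ x : EuclideanSpace ℝ (Fin n), ‖x‖ < 1 → 0 < f x) :
    ∃ ε C : ℝ, 0 < ε ∧ ε < 1 / 2 ∧ 1 / 2 < C ∧
      ∀ i : Fin n, ∀ x : EuclideanSpace ℝ (Fin n),
        1 - ε ≤ ‖x‖ → ‖x‖ ≤ 1 → 1 / (4 * Real.sqrt n) < |x i| →
          (Even k →
            (1 - ‖x‖) / C ≤ iteratedDeriv k (fun t : ℝ => f (WithLp.toLp 2 (Function.update x i t))) (x i) ∧
            iteratedDeriv k (fun t : ℝ => f (WithLp.toLp 2 (Function.update x i t))) (x i) ≤ C * (1 - ‖x‖)) ∧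
          (Odd k → x i < 0 →
            (1 - ‖x‖) / C ≤ iteratedDeriv k (fun t : ℝ => f (WithLp.toLp 2 (Function.update x i t))) (x i) ∧
            iteratedDeriv k (fun t : ℝ => f (WithLp.toLp 2 (Function.update x i t))) (x i) ≤ C * (1 - ‖x‖)) ∧
          (Odd k → 0 < x i →
            (1 - ‖x‖) / C ≤ -iteratedDeriv k (fun t : ℝ => f (WithLp.toLp 2 (Function.update x i t))) (x i) ∧
            -iteratedDeriv k (fun t : ℝ => f (WithLp.toLp 2 (Function.update x i t))) (x i) ≤ C * (1 - ‖x‖)) := by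
  classical
  obtain ⟨W, hWs, hform⟩ := structural k k le_rfl
  have hn2 : (2:ℝ) ≤ n := by exact_mod_cast hn
  have hsn : 1 ≤ Real.sqrt n := by
    rw [show (1:ℝ) = Real.sqrt 1 by simp]
    exact Real.sqrt_le_sqrt (by linarith)
  set c₀ : ℝ := 1 / (4 * Real.sqrt n) with hc₀def
  have hsnpos : (0:ℝ) < Real.sqrt n := by linarith
  have hc₀ : 0 < c₀ := by rw [hc₀def]; positivity
  have hc₀1 : c₀ ≤ 1 := by
    rw [hc₀def, div_le_one (by positivity)]; linarith
  set K : Set (ℝ × ℝ) := {p : ℝ × ℝ | c₀ ≤ |p.2| ∧ p.1 ^ 2 + p.2 ^ 2 ≤ 1} with hKdef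
  have hKO : K ⊆ Om := by
    intro p hp
    obtain ⟨h1, h2⟩ := hp
    have h3 : c₀ ^ 2 ≤ p.2 ^ 2 := by nlinarith [abs_nonneg p.2, sq_abs p.2]
    simp only [Om, Set.mem_setOf_eq]
    nlinarith [sq_nonneg p.1]
  have hKc : IsCompact K := by
    have hcl : IsClosed K := by
      rw [hKdef, Set.setOf_and]
      exact (isClosed_Ici.preimage (by fun_prop : Continuous fun p : ℝ × ℝ => |p.2|)).inter
        (isClosed_Iic.preimage (by fun_prop : Continuous fun p : ℝ × ℝ => p.1 ^ 2 + p.2 ^ 2))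
    have hbd : Bornology.IsBounded K := by
      apply (Metric.isBounded_closedBall (x := (0 : ℝ × ℝ)) (r := 2)).subset
      intro p hp
      obtain ⟨h1, h2⟩ := hp
      have ha1 : |p.1| ≤ 1 := by nlinarith [sq_abs p.1, abs_nonneg p.1, sq_nonneg p.2]
      have ha2 : |p.2| ≤ 1 := by nlinarith [sq_abs p.2, abs_nonneg p.2, sq_nonneg p.1]
      simp only [Metric.mem_closedBall, dist_zero_right, Prod.norm_def, Real.norm_eq_abs]
      exact max_le (by linarith) (by linarith)
    exact Metric.isCompact_of_isClosed_isBounded hcl hbd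
  obtain ⟨M, hM⟩ := hKc.exists_bound_of_continuousOn (hWs.continuousOn.mono hKO)
  have hM'0 : (0:ℝ) ≤ max M 0 := le_max_right M 0
  have hcck : (0:ℝ) < (cc k k : ℝ) := by exact_mod_cast cc_pos k k le_rfl
  have hδ : (0:ℝ) < (cc k k : ℝ) * c₀ ^ k := by positivity
  set δ : ℝ := (cc k k : ℝ) * c₀ ^ k with hδdef
  set ε : ℝ := min (1/4) (δ / (2 * (max M 0 + 1))) with hεdef
  set C : ℝ := 2 / δ + (cc k k : ℝ) + δ + 1 with hCdef
  have hε0 : 0 < ε := lt_min (by norm_num) (div_pos hδ (by linarith))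
  refine ⟨ε, C, hε0, ?_, ?_, ?_⟩
  · calc ε ≤ 1/4 := min_le_left _ _
      _ < 1/2 := by norm_num
  · rw [hCdef]
    have : 0 < 2 / δ := by positivity
    linarith
  intro i x hx1 hx2 hxi
  have hε14 : ε ≤ 1/4 := min_le_left _ _
  have hx34 : (3:ℝ)/4 ≤ ‖x‖ := by linarith
  have ht2 : (x i) ^ 2 ≤ ‖x‖ ^ 2 := coord_sq_le x i
  have htle : |x i| ≤ ‖x‖ := by
    nlinarith [abs_nonneg (x i), sq_abs (x i), norm_nonneg x]
  have ht0 : c₀ < |x i| := by rw [hc₀def]; exact hxi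
  have hs2 : Real.sqrt (‖x‖ ^ 2 - (x i) ^ 2) ^ 2 = ‖x‖ ^ 2 - (x i) ^ 2 :=
    Real.sq_sqrt (by linarith)
  set s : ℝ := Real.sqrt (‖x‖ ^ 2 - (x i) ^ 2) with hsdef
  have hst : s ^ 2 + (x i) ^ 2 = ‖x‖ ^ 2 := by rw [hs2]; ring
  have hsqrtst : Real.sqrt (s ^ 2 + (x i) ^ 2) = ‖x‖ := by
    rw [hst]; exact Real.sqrt_sq (norm_nonneg x)
  -- Step 1 : replace f by the explicit formula
  have heq : iteratedDeriv k (fun τ : ℝ => f (WithLp.toLp 2 (Function.update x i τ))) (x i)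
      = iteratedDeriv k (fun τ : ℝ => (fun q : ℝ × ℝ => Phi q ^ (k + 1)) (s, τ)) (x i) := by
    apply Filter.EventuallyEq.iteratedDeriv_eq
    filter_upwards [Metric.ball_mem_nhds (x i) (by norm_num : (0:ℝ) < 1/8)] with τ hτ
    have hdist : |τ - x i| < 1/8 := by
      simpa [Real.dist_eq] using hτ
    have e1 : |x i| - |τ| ≤ 1/8 := by
      have h := abs_sub_abs_le_abs_sub (x i) τ
      rw [abs_sub_comm] at h
      linarith
    have e3 : |τ| ≤ 9/8 := by
      have h := abs_sub_abs_le_abs_sub τ (x i)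
      have : |x i| ≤ 1 := le_trans htle hx2
      linarith
    have e4 : |τ| - |x i| ≤ 1/8 := by
      have h := abs_sub_abs_le_abs_sub τ (x i)
      linarith
    have hsum0 : (0:ℝ) ≤ |x i| + |τ| := by positivity
    have expand : (|x i| - |τ|) * (|x i| + |τ|) = (x i) ^ 2 - τ ^ 2 := by
      rw [← sq_abs (x i), ← sq_abs τ]; ring
    have e2 : (x i) ^ 2 - τ ^ 2 ≤ (1/8) * (|x i| + |τ|) := by
      have key := mul_le_mul_of_nonneg_right e1 hsum0
      linarith [expand ▸ key]
    have e2' : τ ^ 2 - (x i) ^ 2 ≤ (1/8) * (|x i| + |τ|) := by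
      have key := mul_le_mul_of_nonneg_right e4 hsum0
      nlinarith [key, expand]
    have hA1 : (1:ℝ)/4 ≤ ‖x‖ ^ 2 - (x i) ^ 2 + τ ^ 2 := by
      have hxi1 : |x i| ≤ 1 := le_trans htle hx2
      nlinarith [abs_nonneg τ]
    have hA2 : ‖x‖ ^ 2 - (x i) ^ 2 + τ ^ 2 ≤ 9/4 := by
      have hxi1 : |x i| ≤ 1 := le_trans htle hx2
      nlinarith [abs_nonneg τ, norm_nonneg x]
    set y : EuclideanSpace ℝ (Fin n) := WithLp.toLp 2 (Function.update x i τ) with hy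
    have hny : ‖y‖ = Real.sqrt (‖x‖ ^ 2 - (x i) ^ 2 + τ ^ 2) :=
      norm_update x i τ y (fun j => rfl)
    have hnb1 : 1/2 ≤ ‖y‖ := by
      rw [hny, show (1:ℝ)/2 = Real.sqrt ((1:ℝ)/4) by
        rw [show (1:ℝ)/4 = (1/2)^2 by norm_num, Real.sqrt_sq (by norm_num)]]
      exact Real.sqrt_le_sqrt hA1
    have hnb2 : ‖y‖ ≤ 3/2 := by
      rw [hny, show (3:ℝ)/2 = Real.sqrt ((9:ℝ)/4) by
        rw [show (9:ℝ)/4 = (3/2)^2 by norm_num, Real.sqrt_sq (by norm_num)]]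
      exact Real.sqrt_le_sqrt hA2
    have hPhiτ : Phi (s, τ) = 1 - Real.sqrt (‖x‖ ^ 2 - (x i) ^ 2 + τ ^ 2) := by
      simp only [Phi]
      rw [hs2]
    show f y = _
    rw [ha y hnb1 hnb2, hny, hPhiτ]
  have hmemK : ((s, (x i)) : ℝ × ℝ) ∈ K := by
    rw [hKdef]
    refine ⟨ht0.le, ?_⟩
    simp only
    nlinarith [hst, norm_nonneg x]
  have hmemO : ((s, (x i)) : ℝ × ℝ) ∈ Om := hKO hmemK
  have hPhist : Phi (s, (x i)) = 1 - ‖x‖ := by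
    simp only [Phi]
    rw [hsqrtst]
  have hval : iteratedDeriv k (fun τ : ℝ => f (WithLp.toLp 2 (Function.update x i τ))) (x i)
      = (1 - ‖x‖) * ((cc k k : ℝ) * (pd Phi (s, x i)) ^ k + (1 - ‖x‖) * W (s, x i)) := by
    have h2 : iteratedDeriv k (fun τ : ℝ => (fun q : ℝ × ℝ => Phi q ^ (k + 1)) (s, τ)) (x i)
        = (pd^[k] (fun q : ℝ × ℝ => Phi q ^ (k + 1))) (s, x i) := pd_iterate (fun q : ℝ × ℝ => Phi q ^ (k + 1)) k s (x i)
    rw [heq, h2, hform (s, x i) hmemO, hPhist, show k + 1 - k = 1 by omega, pow_one]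
  have hnx0 : (0:ℝ) < ‖x‖ := by linarith
  have hd : pd Phi (s, x i) = -(x i / ‖x‖) := by
    rw [pd_Phi (by simpa only [Om, Set.mem_setOf_eq] using hmemO)]
    simp only
    rw [hsqrtst]
  have habs_d : |pd Phi (s, x i)| = |x i| / ‖x‖ := by
    rw [hd, abs_neg, abs_div, abs_of_nonneg (norm_nonneg x)]
  have hd1 : c₀ ≤ |pd Phi (s, x i)| := by
    rw [habs_d, le_div_iff₀ hnx0]
    nlinarith
  have hd2 : |pd Phi (s, x i)| ≤ 1 := by
    rw [habs_d, div_le_one hnx0]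
    exact htle
  have hu0 : (0:ℝ) ≤ 1 - ‖x‖ := by linarith
  have huε : 1 - ‖x‖ ≤ ε := by linarith
  have hw : |W (s, x i)| ≤ max M 0 := by
    have := hM _ hmemK
    rw [Real.norm_eq_abs] at this
    exact le_trans this (le_max_left M 0)
  have hcore : ∀ e w' : ℝ, c₀ ^ k ≤ e → e ≤ 1 → |w'| ≤ max M 0 →
      (1 - ‖x‖) / C ≤ (1 - ‖x‖) * ((cc k k : ℝ) * e + (1 - ‖x‖) * w') ∧
      (1 - ‖x‖) * ((cc k k : ℝ) * e + (1 - ‖x‖) * w') ≤ C * (1 - ‖x‖) := by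
    intro e w' he1 he2 hw'
    refine core_bounds hδ hcck hCdef hM'0 hw' hu0 huε hε0.le (min_le_right _ _) ?_ ?_
    · rw [hδdef]
      exact mul_le_mul_of_nonneg_left he1 hcck.le
    · calc (cc k k : ℝ) * e ≤ (cc k k : ℝ) * 1 := mul_le_mul_of_nonneg_left he2 hcck.le
        _ = (cc k k : ℝ) := mul_one _
  have htne : x i ≠ 0 := by
    intro h
    rw [h, abs_zero] at ht0
    linarith
  refine ⟨?_, ?_, ?_⟩
  · -- Even case
    intro hke
    have hdne : pd Phi (s, x i) ≠ 0 := by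
      rw [hd, neg_ne_zero]
      exact div_ne_zero htne (ne_of_gt hnx0)
    have he : pd Phi (s, x i) ^ k = |pd Phi (s, x i)| ^ k := (hke.pow_abs _).symm
    have he1 : c₀ ^ k ≤ pd Phi (s, x i) ^ k := by
      rw [he]; exact pow_le_pow_left₀ hc₀.le hd1 k
    have he2 : pd Phi (s, x i) ^ k ≤ 1 := by
      rw [he]
      calc |pd Phi (s, x i)| ^ k ≤ 1 ^ k := pow_le_pow_left₀ (abs_nonneg _) hd2 k
        _ = 1 := one_pow k
    rw [hval]
    exact hcore _ _ he1 he2 hw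
  · -- Odd, x i < 0
    intro hko hxneg
    have hdpos : 0 < pd Phi (s, x i) := by
      rw [hd, neg_pos]
      exact div_neg_of_neg_of_pos hxneg hnx0
    have he : pd Phi (s, x i) ^ k = |pd Phi (s, x i)| ^ k := by
      rw [abs_of_pos hdpos]
    have he1 : c₀ ^ k ≤ pd Phi (s, x i) ^ k := by
      rw [he]; exact pow_le_pow_left₀ hc₀.le hd1 k
    have he2 : pd Phi (s, x i) ^ k ≤ 1 := by
      rw [he]
      calc |pd Phi (s, x i)| ^ k ≤ 1 ^ k := pow_le_pow_left₀ (abs_nonneg _) hd2 k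
        _ = 1 := one_pow k
    rw [hval]
    exact hcore _ _ he1 he2 hw
  · -- Odd, 0 < x i
    intro hko hxpos
    have hdneg : pd Phi (s, x i) < 0 := by
      rw [hd, neg_lt, neg_zero]
      exact div_pos hxpos hnx0
    have he : -(pd Phi (s, x i) ^ k) = |pd Phi (s, x i)| ^ k := by
      rw [abs_of_neg hdneg, hko.neg_pow]
    have he1 : c₀ ^ k ≤ -(pd Phi (s, x i) ^ k) := by
      rw [he]; exact pow_le_pow_left₀ hc₀.le hd1 k
    have he2 : -(pd Phi (s, x i) ^ k) ≤ 1 := by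
      rw [he]
      calc |pd Phi (s, x i)| ^ k ≤ 1 ^ k := pow_le_pow_left₀ (abs_nonneg _) hd2 k
        _ = 1 := one_pow k
    have hneg : -((1 - ‖x‖) * ((cc k k : ℝ) * (pd Phi (s, x i)) ^ k + (1 - ‖x‖) * W (s, x i)))
        = (1 - ‖x‖) * ((cc k k : ℝ) * (-(pd Phi (s, x i) ^ k)) + (1 - ‖x‖) * (-W (s, x i))) := by
      ring
    rw [hval, hneg]
    exact hcore _ _ he1 he2 (by rw [abs_neg]; exact hw)
end

section
/- Let n ≥ 2 and k ≥ 1 be integers, and let f : ℝ^n → ℝ be an infinitely differentiable function such that f(x) = (1 − ‖x‖)^{k+1} for all x with 1/2 ≤ ‖x‖ ≤ 3/2. Then for each i ∈ {1,…,n} there exists a function g_i, infinitely differentiable on the open annulus A = {x ∈ ℝ^n : 1/2 < ‖x‖ < 3/2}, such that for all x ∈ A: ∂^k f/∂x_i^k(x) = (1−‖x‖)·(−1)^k·(k+1)!·x_i^k/‖x‖^k + (1−‖x‖)²·g_i(x). -/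
/-!
On the open annulus `f = h ^ (k + 1)` with `h = 1 - ‖·‖`, and the `k`-th partial derivative in
the direction `e_i` is the `k`-fold iterated line derivative `∂^k` along `e_i`. Each derivative of
`h ^ N` either lowers the power of `h` by one, producing a factor `∂h`, or keeps it, so
`∂^m (h ^ N) = N (N - 1) ⋯ (N - m + 1) h ^ (N - m) (∂h) ^ m` modulo `h ^ (N - m + 1)` times a
function smooth on the annulus. Take `N = k + 1`, `m = k` and `∂h = -x_i / ‖x‖`.
-/

open Set

section LineDerivCalculus

variable {𝕜 E : Type*} [NontriviallyNormedField 𝕜] [NormedAddCommGroup E] [NormedSpace 𝕜 E]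
  {f g : E → 𝕜} {f' g' : 𝕜} {x v : E}

theorem HasLineDerivAt.add (hf : HasLineDerivAt 𝕜 f f' x v) (hg : HasLineDerivAt 𝕜 g g' x v) :
    HasLineDerivAt 𝕜 (fun y => f y + g y) (f' + g') x v :=
  HasDerivAt.add hf hg

theorem HasLineDerivAt.const_sub (c : 𝕜) (hf : HasLineDerivAt 𝕜 f f' x v) :
    HasLineDerivAt 𝕜 (fun y => c - f y) (-f') x v :=
  HasDerivAt.const_sub c hf

theorem HasLineDerivAt.mul (hf : HasLineDerivAt 𝕜 f f' x v) (hg : HasLineDerivAt 𝕜 g g' x v) :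
    HasLineDerivAt 𝕜 (fun y => f y * g y) (f' * g x + f x * g') x v := by
  simpa [HasLineDerivAt] using HasDerivAt.fun_mul hf hg

theorem HasLineDerivAt.const_mul (c : 𝕜) (hf : HasLineDerivAt 𝕜 f f' x v) :
    HasLineDerivAt 𝕜 (fun y => c * f y) (c * f') x v :=
  HasDerivAt.const_mul c hf

theorem HasLineDerivAt.pow (hf : HasLineDerivAt 𝕜 f f' x v) (m : ℕ) :
    HasLineDerivAt 𝕜 (fun y => f y ^ m) (m * f x ^ (m - 1) * f') x v := by
  simpa [HasLineDerivAt] using HasDerivAt.fun_pow hf m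

end LineDerivCalculus

section IteratedLineDeriv

variable {E F : Type*} [NormedAddCommGroup E] [NormedSpace ℝ E]
  [NormedAddCommGroup F] [NormedSpace ℝ F] {U : Set E}

noncomputable def iteratedLineDeriv (v : E) (m : ℕ) (u : E → F) : E → F :=
  (fun w y => lineDeriv ℝ w y v)^[m] u

theorem iteratedLineDeriv_succ (v : E) (m : ℕ) (u : E → F) (y : E) :
    iteratedLineDeriv v (m + 1) u y = lineDeriv ℝ (iteratedLineDeriv v m u) y v := by
  simp only [iteratedLineDeriv, Function.iterate_succ_apply']

theorem deriv_comp_add_smul (u : E → F) (x v : E) (s : ℝ) :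
    deriv (fun t : ℝ => u (x + t • v)) s = lineDeriv ℝ u (x + s • v) v := by
  have shift := deriv_comp_const_add (fun t : ℝ => u (x + t • v)) s 0
  rw [add_zero] at shift
  simp only [← shift, lineDeriv, add_smul, add_assoc]

theorem iteratedDeriv_comp_add_smul (m : ℕ) (u : E → F) (x v : E) (s : ℝ) :
    iteratedDeriv m (fun t : ℝ => u (x + t • v)) s
      = iteratedLineDeriv v m u (x + s • v) := by
  induction m generalizing u with
  | zero => simp [iteratedLineDeriv]
  | succ m ih =>
    rw [iteratedDeriv_succ', iteratedLineDeriv, Function.iterate_succ_apply, ← iteratedLineDeriv,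
      ← ih]
    congr 1
    exact funext (deriv_comp_add_smul u x v)

theorem Set.EqOn.iteratedLineDeriv (hU : IsOpen U) {u w : E → F} (huw : EqOn u w U) (v : E)
    (m : ℕ) : EqOn (iteratedLineDeriv v m u) (iteratedLineDeriv v m w) U := by
  induction m with
  | zero => exact huw
  | succ m ih =>
    intro y hy
    rw [iteratedLineDeriv_succ, iteratedLineDeriv_succ]
    exact Filter.EventuallyEq.lineDeriv_eq (Filter.eventuallyEq_of_mem (hU.mem_nhds hy) ih)

theorem ContDiffOn.hasLineDerivAt (hU : IsOpen U) {u : E → F} (hu : ContDiffOn ℝ (⊤ : ℕ∞) u U)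
    {y : E} (hy : y ∈ U) (v : E) : HasLineDerivAt ℝ u (lineDeriv ℝ u y v) y v :=
  ((hu.differentiableOn (by simp)).differentiableAt
    (hU.mem_nhds hy)).lineDifferentiableAt.hasLineDerivAt

theorem ContDiffOn.lineDeriv (hU : IsOpen U) {u : E → F} (hu : ContDiffOn ℝ (⊤ : ℕ∞) u U)
    (v : E) :
    ContDiffOn ℝ (⊤ : ℕ∞) (fun y => lineDeriv ℝ u y v) U := by
  refine ((hu.fderiv_of_isOpen hU le_rfl).clm_apply (contDiffOn_const (c := v))).congr
    fun y hy => ?_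
  exact ((hu.differentiableOn (by simp)).differentiableAt (hU.mem_nhds hy)).lineDeriv_eq_fderiv

theorem exists_iteratedLineDeriv_pow_eq (hU : IsOpen U) (v : E) {h : E → ℝ}
    (hh : ContDiffOn ℝ (⊤ : ℕ∞) h U) {N m : ℕ} (hm : m ≤ N) :
    ∃ G : E → ℝ, ContDiffOn ℝ (⊤ : ℕ∞) G U ∧ ∀ y ∈ U,
      iteratedLineDeriv v m (fun y => h y ^ N) y
        = N.descFactorial m * h y ^ (N - m) * lineDeriv ℝ h y v ^ m + h y ^ (N - m + 1) * G y := by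
  induction m with
  | zero => exact ⟨0, contDiffOn_const, fun y _ => by simp [iteratedLineDeriv]⟩
  | succ m ih =>
    obtain ⟨G, hG, hexp⟩ := ih (by omega)
    set C : ℝ := (N.descFactorial m : ℝ)
    set a := N - (m + 1)
    have hNm : N - m = a + 1 := by omega
    have hp := hh.lineDeriv hU v
    have hp' := hp.lineDeriv hU v
    have hG' := hG.lineDeriv hU v
    refine ⟨fun y => C * m * lineDeriv ℝ h y v ^ (m - 1) * lineDeriv ℝ (lineDeriv ℝ h · v) y v
      + (a + 2) * lineDeriv ℝ h y v * G y
      + h y * lineDeriv ℝ G y v, by fun_prop, fun y hy => ?_⟩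
    have hD := ((((hh.hasLineDerivAt hU hy v).pow (a + 1)).const_mul C).mul
      ((hp.hasLineDerivAt hU hy v).pow m)).add
      (((hh.hasLineDerivAt hU hy v).pow (a + 2)).mul (hG.hasLineDerivAt hU hy v))
    calc iteratedLineDeriv v (m + 1) (fun y => h y ^ N) y
        = lineDeriv ℝ (fun y => C * h y ^ (a + 1) * lineDeriv ℝ h y v ^ m + h y ^ (a + 2) * G y)
            y v := by
          rw [iteratedLineDeriv_succ]
          refine Filter.EventuallyEq.lineDeriv_eq
            (Filter.eventuallyEq_of_mem (hU.mem_nhds hy) fun z hz => ?_)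
          rw [hexp z hz, hNm]
      _ = _ := hD.lineDeriv
      _ = _ := by
          rw [Nat.descFactorial_succ, hNm, Nat.add_sub_cancel, show a + 2 - 1 = a + 1 by omega]
          push_cast
          ring

end IteratedLineDeriv

theorem hasLineDerivAt_norm {F : Type*} [NormedAddCommGroup F] [InnerProductSpace ℝ F] {x : F}
    (hx : x ≠ 0) (v : F) : HasLineDerivAt ℝ (‖·‖) (inner ℝ x v / ‖x‖) x v := by
  have hsq : HasDerivAt (fun t : ℝ => ‖x + t • v‖ ^ 2) (2 * inner ℝ x v) 0 := by
    simpa using ((hasDerivAt_id (0 : ℝ)).smul_const v).const_add x |>.norm_sq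
  have hnorm := hsq.sqrt (by simpa using hx)
  simp only [Real.sqrt_sq (norm_nonneg _), zero_smul, add_zero] at hnorm
  exact hnorm.congr_deriv (by field_simp)

theorem EuclideanSpace.toLp_update_eq_add_smul_single {𝕜 ι : Type*} [RCLike 𝕜] [DecidableEq ι]
    (x : EuclideanSpace 𝕜 ι) (i : ι) (t : 𝕜) :
    WithLp.toLp 2 (Function.update x i t) = x + (t - x i) • EuclideanSpace.single i 1 := by
  ext j
  rcases eq_or_ne j i with rfl | hji <;> simp [*]

theorem kth_partial_derivative_expansion_on_annulus_general
    (n k : ℕ)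
    (f : EuclideanSpace ℝ (Fin n) → ℝ)
    (ha : ∀ x : EuclideanSpace ℝ (Fin n), 1 / 2 ≤ ‖x‖ → ‖x‖ ≤ 3 / 2 →
      f x = (1 - ‖x‖) ^ (k + 1)) :
    ∀ i : Fin n, ∃ g : EuclideanSpace ℝ (Fin n) → ℝ,
      ContDiffOn ℝ (⊤ : ℕ∞) g {x : EuclideanSpace ℝ (Fin n) | 1 / 2 < ‖x‖ ∧ ‖x‖ < 3 / 2} ∧
      ∀ x : EuclideanSpace ℝ (Fin n), 1 / 2 < ‖x‖ → ‖x‖ < 3 / 2 →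
        iteratedDeriv k (fun t : ℝ => f (WithLp.toLp 2 (Function.update x i t))) (x i) =
          (1 - ‖x‖) * ((-1 : ℝ) ^ k * (Nat.factorial (k + 1) : ℝ) * (x i) ^ k / ‖x‖ ^ k)
            + (1 - ‖x‖) ^ 2 * g x := by
  intro i
  set A := {x : EuclideanSpace ℝ (Fin n) | 1 / 2 < ‖x‖ ∧ ‖x‖ < 3 / 2}
  set e := EuclideanSpace.single i (1 : ℝ)
  have hA : IsOpen A := isOpen_Ioo.preimage continuous_norm
  have hA0 : ∀ x ∈ A, x ≠ 0 := fun x hx h0 => by subst h0; norm_num [A] at hx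
  have hh : ContDiffOn ℝ (⊤ : ℕ∞) (fun x => 1 - ‖x‖) A :=
    contDiffOn_const.sub fun x hx => (contDiffAt_norm ℝ (hA0 x hx)).contDiffWithinAt
  obtain ⟨G, hG, hexp⟩ := exists_iteratedLineDeriv_pow_eq hA e hh (by omega : k ≤ k + 1)
  refine ⟨G, hG, fun x hx₁ hx₂ => ?_⟩
  have hx : x ∈ A := ⟨hx₁, hx₂⟩
  have hderiv : lineDeriv ℝ (fun y => 1 - ‖y‖) x e = -(x i / ‖x‖) := by
    simpa [e, EuclideanSpace.inner_single_right] using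
      ((hasLineDerivAt_norm (hA0 x hx) e).const_sub 1).lineDeriv
  have hfact : (k + 1).descFactorial k = Nat.factorial (k + 1) := by
    simpa using Nat.factorial_mul_descFactorial (Nat.le_succ k)
  calc iteratedDeriv k (fun t : ℝ => f (WithLp.toLp 2 (Function.update x i t))) (x i)
      = iteratedDeriv k (fun s => f (x + s • e)) (x i - x i) := by
        simp only [EuclideanSpace.toLp_update_eq_add_smul_single, e]
        exact congrFun (iteratedDeriv_comp_sub_const k (fun s => f (x + s • e)) (x i)) (x i)
    _ = iteratedLineDeriv e k f x := by
        rw [sub_self, iteratedDeriv_comp_add_smul, zero_smul, add_zero]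
    _ = iteratedLineDeriv e k (fun y => (1 - ‖y‖) ^ (k + 1)) x :=
        Set.EqOn.iteratedLineDeriv hA (fun y hy => ha y hy.1.le hy.2.le) e k hx
    _ = _ := by
        rw [hexp x hx, hderiv, hfact, show k + 1 - k = 1 by omega]
        ring

theorem kth_partial_derivative_expansion_on_annulus
    (n k : ℕ) (hn : 2 ≤ n) (hk : 1 ≤ k)
    (f : EuclideanSpace ℝ (Fin n) → ℝ) (hf : ContDiff ℝ (⊤ : ℕ∞) f)
    (ha : ∀ x : EuclideanSpace ℝ (Fin n), 1 / 2 ≤ ‖x‖ → ‖x‖ ≤ 3 / 2 →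
      f x = (1 - ‖x‖) ^ (k + 1)) :
    ∀ i : Fin n, ∃ g : EuclideanSpace ℝ (Fin n) → ℝ,
      ContDiffOn ℝ (⊤ : ℕ∞) g {x : EuclideanSpace ℝ (Fin n) | 1 / 2 < ‖x‖ ∧ ‖x‖ < 3 / 2} ∧
      ∀ x : EuclideanSpace ℝ (Fin n), 1 / 2 < ‖x‖ → ‖x‖ < 3 / 2 →
        iteratedDeriv k (fun t : ℝ => f (WithLp.toLp 2 (Function.update x i t))) (x i) =
          (1 - ‖x‖) * ((-1 : ℝ) ^ k * (Nat.factorial (k + 1) : ℝ) * (x i) ^ k / ‖x‖ ^ k)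
            + (1 - ‖x‖) ^ 2 * g x :=
  kth_partial_derivative_expansion_on_annulus_general n k f ha
end

section
/- Let n ≥ 2. Define P : ℝ^n × ℝ → ℝ^n × ℝ = ℝ^{n+1} by P(0,t) = (0,…,0,t) and P(y,t) = ((sin(π‖y‖/2)/‖y‖)·y, t·cos(π‖y‖/2)) for y ≠ 0; equivalently, P(θ·x, t) = (x·sin(πθ/2), t·cos(πθ/2)) for x in the unit sphere S^{n−1}, θ ∈ [0,1], and t ∈ [−1,1]. Then P maps the cylinder C^{n+1} = B̄^n × [−1,1] onto the closed unit ball B̄^{n+1} = {v ∈ ℝ^{n+1} : ‖v‖ ≤ 1}, and P is Lipschitz on C^{n+1}: there exists a constant K such that ‖P(y,t) − P(z,s)‖ ≤ K·‖(y,t) − (z,s)‖ for all (y,t), (z,s) ∈ C^{n+1}. -/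
lemma sin_diff_le' (x y : ℝ) : |Real.sin x - Real.sin y| ≤ |x - y| := by
  rw [Real.sin_sub_sin]
  calc |2 * Real.sin ((x - y)/2) * Real.cos ((x + y)/2)|
      = 2 * |Real.sin ((x - y)/2)| * |Real.cos ((x + y)/2)| := by
        rw [abs_mul, abs_mul]; norm_num
    _ ≤ 2 * |(x - y)/2| * 1 :=
        mul_le_mul (mul_le_mul_of_nonneg_left Real.abs_sin_le_abs two_pos.le)
          (Real.abs_cos_le_one _) (abs_nonneg _) (by positivity)
    _ = |x - y| := by rw [abs_div, abs_two]; ring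

lemma cos_diff_le' (x y : ℝ) : |Real.cos x - Real.cos y| ≤ |x - y| := by
  rw [Real.cos_sub_cos]
  calc |-2 * Real.sin ((x + y)/2) * Real.sin ((x - y)/2)|
      = 2 * |Real.sin ((x + y)/2)| * |Real.sin ((x - y)/2)| := by
        rw [abs_mul, abs_mul]; norm_num
    _ ≤ 2 * 1 * |(x - y)/2| :=
        mul_le_mul (mul_le_mul_of_nonneg_left (Real.abs_sin_le_one _) two_pos.le)
          Real.abs_sin_le_abs (abs_nonneg _) (by positivity)
    _ = |x - y| := by rw [abs_div, abs_two]; ring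

lemma key_div_lemma (a b sa sb : ℝ) (ha : 0 < a) (hb : 0 < b) (hba : b ≤ a)
    (h1 : |sa - sb| ≤ Real.pi/2 * |a-b|) (h2 : |sb| ≤ Real.pi*b/2) :
    |sa/a - sb/b| * b ≤ Real.pi * |a-b| := by
  have hrw : sa/a - sb/b = (b*(sa-sb) + (b-a)*sb)/(a*b) := by field_simp; ring
  rw [hrw, abs_div, abs_of_pos (by positivity : (0:ℝ) < a*b)]
  have hnum : |b*(sa-sb) + (b-a)*sb| ≤ Real.pi * b * |a-b| := by
    calc |b*(sa-sb) + (b-a)*sb| ≤ |b*(sa-sb)| + |(b-a)*sb| := abs_add_le _ _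
    _ = b * |sa-sb| + |a-b| * |sb| := by
        rw [abs_mul, abs_mul, abs_of_pos hb, abs_sub_comm b a]
    _ ≤ b * (Real.pi/2 * |a-b|) + |a-b| * (Real.pi*b/2) := by gcongr
    _ = Real.pi * b * |a-b| := by ring
  rw [div_mul_eq_mul_div, div_le_iff₀ (by positivity)]
  have h3 : Real.pi * |a-b| * b * b ≤ Real.pi * |a-b| * b * a :=
    mul_le_mul_of_nonneg_left hba (by positivity)
  nlinarith [abs_nonneg (b*(sa-sb) + (b-a)*sb), hb.le]

lemma abs_sin_pi_half (a : ℝ) (ha : 0 ≤ a) :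
    |Real.sin (Real.pi * a / 2)| ≤ Real.pi * a / 2 := by
  calc |Real.sin (Real.pi * a / 2)| ≤ |Real.pi * a / 2| := Real.abs_sin_le_abs
    _ = Real.pi * a / 2 := abs_of_nonneg (by positivity)

lemma sin_diff_pi_half (a b : ℝ) :
    |Real.sin (Real.pi * a / 2) - Real.sin (Real.pi * b / 2)| ≤ Real.pi/2 * |a - b| := by
  calc |Real.sin (Real.pi * a / 2) - Real.sin (Real.pi * b / 2)|
      ≤ |Real.pi * a / 2 - Real.pi * b / 2| := sin_diff_le' _ _
    _ = Real.pi/2 * |a - b| := by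
        rw [show Real.pi * a / 2 - Real.pi * b / 2 = Real.pi/2 * (a - b) by ring,
          abs_mul, abs_of_pos (by positivity : (0:ℝ) < Real.pi/2)]

lemma f_lip {E : Type*} [NormedAddCommGroup E] [NormedSpace ℝ E]
    (y z : E) (hy : y ≠ 0) (hz : z ≠ 0) (h : ‖z‖ ≤ ‖y‖) :
    ‖(Real.sin (Real.pi * ‖y‖ / 2) / ‖y‖) • y - (Real.sin (Real.pi * ‖z‖ / 2) / ‖z‖) • z‖
      ≤ (3 * Real.pi / 2) * ‖y - z‖ := by
  have ha : (0:ℝ) < ‖y‖ := norm_pos_iff.mpr hy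
  have hb : (0:ℝ) < ‖z‖ := norm_pos_iff.mpr hz
  set a := ‖y‖
  set b := ‖z‖
  set sa := Real.sin (Real.pi * a / 2)
  set sb := Real.sin (Real.pi * b / 2)
  have hdecomp : (sa/a) • y - (sb/b) • z = (sa/a) • (y - z) + (sa/a - sb/b) • z := by
    rw [smul_sub, sub_smul]; abel
  rw [hdecomp]
  have hT1 : ‖(sa/a) • (y - z)‖ ≤ Real.pi/2 * ‖y - z‖ := by
    rw [norm_smul, Real.norm_eq_abs]
    have : |sa/a| ≤ Real.pi/2 := by
      rw [abs_div, abs_of_pos ha, div_le_iff₀ ha]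
      calc |sa| ≤ Real.pi * a / 2 := abs_sin_pi_half a ha.le
        _ = Real.pi/2 * a := by ring
    exact mul_le_mul_of_nonneg_right this (norm_nonneg _)
  have hT2 : ‖(sa/a - sb/b) • z‖ ≤ Real.pi * ‖y - z‖ := by
    rw [norm_smul, Real.norm_eq_abs]
    calc |sa/a - sb/b| * b ≤ Real.pi * |a - b| :=
          key_div_lemma a b sa sb ha hb h (sin_diff_pi_half a b) (abs_sin_pi_half b hb.le)
      _ ≤ Real.pi * ‖y - z‖ :=
          mul_le_mul_of_nonneg_left (abs_norm_sub_norm_le y z) Real.pi_pos.le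
  calc ‖(sa/a) • (y - z) + (sa/a - sb/b) • z‖
      ≤ ‖(sa/a) • (y - z)‖ + ‖(sa/a - sb/b) • z‖ := norm_add_le _ _
    _ ≤ Real.pi/2 * ‖y - z‖ + Real.pi * ‖y - z‖ := add_le_add hT1 hT2
    _ = (3 * Real.pi / 2) * ‖y - z‖ := by ring

theorem cylinder_to_ball_projection_lipschitz
    (n : ℕ) (hn : 2 ≤ n)
    (P : EuclideanSpace ℝ (Fin n) × ℝ → EuclideanSpace ℝ (Fin n) × ℝ)
    (hP0 : ∀ t : ℝ, P (0, t) = (0, t))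
    (hP : ∀ (y : EuclideanSpace ℝ (Fin n)) (t : ℝ), y ≠ 0 →
      P (y, t) = ((Real.sin (Real.pi * ‖y‖ / 2) / ‖y‖) • y,
        t * Real.cos (Real.pi * ‖y‖ / 2))) :
    P '' {p : EuclideanSpace ℝ (Fin n) × ℝ | ‖p.1‖ ≤ 1 ∧ |p.2| ≤ 1} =
      {v : EuclideanSpace ℝ (Fin n) × ℝ | ‖v.1‖ ^ 2 + v.2 ^ 2 ≤ 1} ∧
    ∃ K : ℝ, ∀ p ∈ {p : EuclideanSpace ℝ (Fin n) × ℝ | ‖p.1‖ ≤ 1 ∧ |p.2| ≤ 1},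
      ∀ q ∈ {p : EuclideanSpace ℝ (Fin n) × ℝ | ‖p.1‖ ≤ 1 ∧ |p.2| ≤ 1},
        ‖P p - P q‖ ≤ K * ‖p - q‖ := by
  have hsnd : ∀ (y : EuclideanSpace ℝ (Fin n)) (t : ℝ),
      (P (y, t)).2 = t * Real.cos (Real.pi * ‖y‖ / 2) := by
    intro y t
    by_cases hy : y = 0
    · subst hy; rw [hP0]; simp
    · rw [hP y t hy]
  constructor
  · ext v
    simp only [Set.mem_image, Set.mem_setOf_eq]
    constructor
    · rintro ⟨⟨y, t⟩, ⟨hy1, ht⟩, rfl⟩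
      simp only at hy1 ht
      by_cases hy : y = 0
      · subst hy
        rw [hP0]
        simp only [norm_zero]
        have := abs_le.mp ht
        nlinarith [sq_abs t]
      · rw [hP y t hy]
        have ha : (0:ℝ) < ‖y‖ := norm_pos_iff.mpr hy
        simp only
        rw [norm_smul, Real.norm_eq_abs]
        have hnorm : |Real.sin (Real.pi * ‖y‖ / 2) / ‖y‖| * ‖y‖
            = |Real.sin (Real.pi * ‖y‖ / 2)| := by
          rw [abs_div, abs_of_pos ha, div_mul_cancel₀ _ ha.ne']
        rw [hnorm]
        have hpyth := Real.sin_sq_add_cos_sq (Real.pi * ‖y‖ / 2)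
        have ht2 := abs_le.mp ht
        have h1t : (0:ℝ) ≤ 1 - t ^ 2 := by nlinarith [ht2.1, ht2.2]
        nlinarith [sq_abs (Real.sin (Real.pi * ‖y‖ / 2)),
          mul_nonneg h1t (sq_nonneg (Real.cos (Real.pi * ‖y‖ / 2)))]
    · rintro hv
      obtain ⟨w, u⟩ := v
      simp only at hv
      by_cases hw : w = 0
      · subst hw
        have hv' : u ^ 2 ≤ 1 := by
          have h0 : ‖((0 : EuclideanSpace ℝ (Fin n)), u).1‖ = 0 := norm_zero
          nlinarith [hv, sq_nonneg ‖((0 : EuclideanSpace ℝ (Fin n)), u).1‖]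
        have hu1 : |u| ≤ 1 := by nlinarith [abs_nonneg u, sq_abs u]
        exact ⟨(0, u), ⟨by simp [hu1], by rw [hP0]⟩⟩
      · have hr : (0:ℝ) < ‖w‖ := norm_pos_iff.mpr hw
        set r := ‖w‖ with hrdef
        have hr2 : r ^ 2 ≤ 1 := by nlinarith [sq_nonneg u]
        have hr1 : r ≤ 1 := by nlinarith
        set θ := 2 / Real.pi * Real.arcsin r with hθdef
        have harcpos : 0 < Real.arcsin r := Real.arcsin_pos.mpr hr
        have hθpos : 0 < θ := by positivity
        have hθ1 : θ ≤ 1 := by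
          have := Real.arcsin_le_pi_div_two r
          rw [hθdef]
          rw [div_mul_eq_mul_div, div_le_one Real.pi_pos]
          linarith
        set y : EuclideanSpace ℝ (Fin n) := (θ / r) • w with hydef
        have hy0 : y ≠ 0 := smul_ne_zero (by positivity) hw
        have hny : ‖y‖ = θ := by
          rw [hydef, norm_smul, Real.norm_eq_abs, abs_of_pos (by positivity),
            div_mul_cancel₀ _ hr.ne']
        have hA : Real.pi * ‖y‖ / 2 = Real.arcsin r := by
          rw [hny, hθdef]
          field_simp
        have hsinA : Real.sin (Real.pi * ‖y‖ / 2) = r := by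
          rw [hA, Real.sin_arcsin (by linarith) hr1]
        have hcosA : Real.cos (Real.pi * ‖y‖ / 2) = Real.sqrt (1 - r ^ 2) := by
          rw [hA, Real.cos_arcsin]
        set t := u / Real.sqrt (1 - r ^ 2) with htdef
        have hu2 : u ^ 2 ≤ 1 - r ^ 2 := by nlinarith
        have htprop : |t| ≤ 1 ∧ t * Real.sqrt (1 - r ^ 2) = u := by
          by_cases hs : Real.sqrt (1 - r ^ 2) = 0
          · have h0 : 1 - r ^ 2 ≤ 0 := Real.sqrt_eq_zero'.mp hs
            have hu0 : u = 0 := by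
              have h00 : u ^ 2 = 0 := le_antisymm (by linarith) (sq_nonneg u)
              exact pow_eq_zero_iff two_ne_zero |>.mp h00
            refine ⟨by rw [htdef, hu0]; simp, by rw [htdef, hu0]; simp⟩
          · have hspos : 0 < Real.sqrt (1 - r ^ 2) :=
              lt_of_le_of_ne (Real.sqrt_nonneg _) (Ne.symm hs)
            constructor
            · rw [htdef, abs_div, abs_of_pos hspos, div_le_one hspos]
              calc |u| = Real.sqrt (u ^ 2) := (Real.sqrt_sq_eq_abs u).symm
                _ ≤ Real.sqrt (1 - r ^ 2) := Real.sqrt_le_sqrt hu2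
            · rw [htdef, div_mul_cancel₀ _ hs]
        refine ⟨(y, t), ⟨by rw [hny]; exact hθ1, htprop.1⟩, ?_⟩
        rw [hP y t hy0, hsinA, hcosA]
        refine Prod.ext ?_ ?_
        · simp only [hydef]
          rw [smul_smul, hny]
          rw [show r / θ * (θ / r) = 1 by field_simp]
          exact one_smul _ _
        · exact htprop.2
  · refine ⟨2 * Real.pi + 1, ?_⟩
    rintro ⟨y, t⟩ ⟨hy1, ht1⟩ ⟨z, s⟩ ⟨hz1, hs1⟩
    simp only at hy1 ht1 hz1 hs1
    have h1 : ‖(P (y, t)).1 - (P (z, s)).1‖ ≤ (3 * Real.pi / 2) * ‖y - z‖ := by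
      by_cases hy : y = 0
      · by_cases hz : z = 0
        · subst hy; subst hz; rw [hP0, hP0]; simp [Real.pi_pos.le]
        · subst hy
          rw [hP0, hP z s hz]
          have hb : (0:ℝ) < ‖z‖ := norm_pos_iff.mpr hz
          simp only [zero_sub, norm_neg]
          rw [norm_smul, Real.norm_eq_abs, abs_div, abs_of_pos hb,
            div_mul_cancel₀ _ hb.ne']
          have h2 := abs_sin_pi_half ‖z‖ hb.le
          nlinarith [Real.pi_pos, hb.le]
      · by_cases hz : z = 0
        · subst hz
          rw [hP0, hP y t hy]
          have ha : (0:ℝ) < ‖y‖ := norm_pos_iff.mpr hy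
          simp only [sub_zero]
          rw [norm_smul, Real.norm_eq_abs, abs_div, abs_of_pos ha,
            div_mul_cancel₀ _ ha.ne']
          have h2 := abs_sin_pi_half ‖y‖ ha.le
          nlinarith [Real.pi_pos, ha.le]
        · rw [hP y t hy, hP z s hz]
          simp only
          rcases le_total ‖z‖ ‖y‖ with hle | hle
          · exact f_lip y z hy hz hle
          · rw [norm_sub_rev, norm_sub_rev y z]
            exact f_lip z y hz hy hle
    have h2 : |(P (y, t)).2 - (P (z, s)).2| ≤ |t - s| + Real.pi/2 * ‖y - z‖ := by
      rw [hsnd y t, hsnd z s]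
      set A := Real.pi * ‖y‖ / 2
      set B := Real.pi * ‖z‖ / 2
      have hrw : t * Real.cos A - s * Real.cos B
          = (t - s) * Real.cos A + s * (Real.cos A - Real.cos B) := by ring
      rw [hrw]
      calc |(t - s) * Real.cos A + s * (Real.cos A - Real.cos B)|
          ≤ |(t - s) * Real.cos A| + |s * (Real.cos A - Real.cos B)| := abs_add_le _ _
        _ = |t - s| * |Real.cos A| + |s| * |Real.cos A - Real.cos B| := by
            rw [abs_mul, abs_mul]
        _ ≤ |t - s| * 1 + 1 * |A - B| :=
            add_le_add (mul_le_mul_of_nonneg_left (Real.abs_cos_le_one _) (abs_nonneg _))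
              (mul_le_mul hs1 (cos_diff_le' _ _) (abs_nonneg _) zero_le_one)
        _ ≤ |t - s| + Real.pi/2 * ‖y - z‖ := by
            have : |A - B| ≤ Real.pi/2 * ‖y - z‖ := by
              have : A - B = Real.pi/2 * (‖y‖ - ‖z‖) := by simp only [A, B]; ring
              rw [this, abs_mul, abs_of_pos (by positivity : (0:ℝ) < Real.pi/2)]
              exact mul_le_mul_of_nonneg_left (abs_norm_sub_norm_le y z) (by positivity)
            linarith
    have hfst : ‖y - z‖ ≤ ‖(y, t) - (z, s)‖ := by
      have := norm_fst_le ((y, t) - (z, s))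
      simpa using this
    have hsnd' : |t - s| ≤ ‖(y, t) - (z, s)‖ := by
      have := norm_snd_le ((y, t) - (z, s))
      simpa [Real.norm_eq_abs] using this
    have hnorm : ‖P (y, t) - P (z, s)‖
        = max ‖(P (y, t)).1 - (P (z, s)).1‖ |(P (y, t)).2 - (P (z, s)).2| := by
      rw [Prod.norm_def]; rfl
    rw [hnorm]
    have hd : (0:ℝ) ≤ ‖(y, t) - (z, s)‖ := norm_nonneg _
    apply max_le
    · calc ‖(P (y, t)).1 - (P (z, s)).1‖ ≤ (3 * Real.pi / 2) * ‖y - z‖ := h1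
        _ ≤ (3 * Real.pi / 2) * ‖(y, t) - (z, s)‖ := by
            exact mul_le_mul_of_nonneg_left hfst (by positivity)
        _ ≤ (2 * Real.pi + 1) * ‖(y, t) - (z, s)‖ := by
            apply mul_le_mul_of_nonneg_right _ hd
            nlinarith [Real.pi_pos]
    · calc |(P (y, t)).2 - (P (z, s)).2| ≤ |t - s| + Real.pi/2 * ‖y - z‖ := h2
        _ ≤ ‖(y, t) - (z, s)‖ + Real.pi/2 * ‖(y, t) - (z, s)‖ := by
            have := mul_le_mul_of_nonneg_left hfst
              (by positivity : (0:ℝ) ≤ Real.pi/2)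
            linarith
        _ ≤ (2 * Real.pi + 1) * ‖(y, t) - (z, s)‖ := by
            nlinarith [Real.pi_pos, hd]
end

section
/- Let n ≥ 1 and let λ : [−1,1]^n → ℝ^n be defined by λ(0) = 0 and λ(x) = (‖x‖_∞/‖x‖)·x for x ≠ 0. Then λ is biLipschitz on [−1,1]^n with explicit constants: for all x, y ∈ [−1,1]^n, (1/(3(n+1)))·‖x − y‖ ≤ ‖λ(x) − λ(y)‖ ≤ 3·‖x − y‖, where ‖·‖ is the Euclidean norm. -/
/-!
The map `λ` is the radial rescaling `x ↦ (p x / q x) • x` with `p` the sup norm and `q` the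
Euclidean norm, and its inverse is the rescaling with `p` and `q` exchanged. If `p` and `q` are
dominated by `‖·‖`, `p ≤ K q` and `‖·‖ ≤ M q`, then splitting
`r z - r w = (p z / q z) • (z - w) + (p z / q z - p w / q w) • w`, with `q w ≤ q z`, shows that
the rescaling is `(K + (1 + K) M)`-Lipschitz. For `λ` take `K = M = 1`; for its inverse
`K = M = √n`, and `√n + (1 + √n) √n ≤ 3 (n + 1)`.
-/

open WithLp

section RadialRescale

variable {E : Type*} [NormedAddCommGroup E] [NormedSpace ℝ E]

noncomputable def radialRescale (p q : Seminorm ℝ E) (x : E) : E := (p x / q x) • x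

variable (p q : Seminorm ℝ E)

lemma radialRescale_radialRescale (hp : ∀ x, p x = 0 → x = 0) (hq : ∀ x, q x = 0 → x = 0)
    (x : E) : radialRescale q p (radialRescale p q x) = x := by
  rcases eq_or_ne x 0 with rfl | hx
  · simp [radialRescale]
  have hpq : p x * q x ≠ 0 := mul_ne_zero (mt (hp x) hx) (mt (hq x) hx)
  have hc : 0 ≤ p x / q x := div_nonneg (apply_nonneg p x) (apply_nonneg q x)
  simp only [radialRescale, map_smul_eq_mul, Real.norm_eq_abs, abs_of_nonneg hc, smul_smul]
  field_simp
  rw [div_self hpq, one_smul]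

lemma abs_div_sub_div_mul_le {a b c d K ε : ℝ} (hb : 0 < b) (hd : 0 < d) (hdb : d ≤ b)
    (hc : 0 ≤ c) (hcd : c ≤ K * d) (hac : |a - c| ≤ ε) (hbd : |b - d| ≤ ε) :
    |a / b - c / d| * d ≤ (1 + K) * ε := by
  have hK : 0 ≤ K := nonneg_of_mul_nonneg_left (hc.trans hcd) hd
  have hε : 0 ≤ ε := (abs_nonneg _).trans hac
  have hsplit : (a / b - c / d) * d = ((a - c) * d + c * (d - b)) / b := by
    field_simp; ring
  rw [← abs_of_pos hd, ← abs_mul, abs_of_pos hd, hsplit, abs_div, abs_of_pos hb, div_le_iff₀ hb]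
  calc |(a - c) * d + c * (d - b)| ≤ |a - c| * d + c * |b - d| := by
        refine (abs_add_le _ _).trans_eq ?_
        rw [abs_mul, abs_mul, abs_of_pos hd, abs_of_nonneg hc, abs_sub_comm d]
    _ ≤ ε * b + K * b * ε := by
        gcongr
        exact hcd.trans (by gcongr)
    _ = (1 + K) * ε * b := by ring

lemma abs_sub_apply_le_of_le_norm (hp : ∀ x, p x ≤ ‖x‖) (x y : E) : |p x - p y| ≤ ‖x - y‖ :=
  (p.norm_sub_map_le_sub x y).trans (hp _)

lemma norm_radialRescale_sub_le {K M : ℝ} (hp : ∀ x, p x ≤ ‖x‖) (hq : ∀ x, q x ≤ ‖x‖)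
    (hpq : ∀ x, p x ≤ K * q x) (hM : ∀ x, ‖x‖ ≤ M * q x) (hM0 : 0 ≤ M) (z w : E) :
    ‖radialRescale p q z - radialRescale p q w‖ ≤ (K + (1 + K) * M) * ‖z - w‖ := by
  wlog hwz : q w ≤ q z generalizing z w
  · rw [norm_sub_rev, norm_sub_rev z]
    exact this w z (le_of_not_ge hwz)
  have eq_zero_of_q {x : E} (hx : q x = 0) : x = 0 :=
    norm_le_zero_iff.mp (by simpa [hx] using hM x)
  rcases (apply_nonneg q z).eq_or_lt with hz | hz
  · have hw : q w = 0 := le_antisymm (hwz.trans_eq hz.symm) (apply_nonneg q w)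
    simp [eq_zero_of_q hz.symm, eq_zero_of_q hw]
  have hK : p z / q z ≤ K := (div_le_iff₀ hz).mpr (hpq z)
  have first : ‖(p z / q z) • (z - w)‖ ≤ K * ‖z - w‖ := by
    rw [norm_smul, Real.norm_of_nonneg (div_nonneg (apply_nonneg p z) hz.le)]
    gcongr
  have second : ‖(p z / q z - p w / q w) • w‖ ≤ (1 + K) * M * ‖z - w‖ := by
    rcases (apply_nonneg q w).eq_or_lt with hw | hw
    · have : 0 ≤ K := (div_nonneg (apply_nonneg p z) hz.le).trans hK
      simp only [eq_zero_of_q hw.symm, smul_zero, norm_zero]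
      positivity
    calc ‖(p z / q z - p w / q w) • w‖ ≤ |p z / q z - p w / q w| * (M * q w) := by
          rw [norm_smul, Real.norm_eq_abs]
          gcongr
          exact hM w
      _ = M * (|p z / q z - p w / q w| * q w) := by ring
      _ ≤ M * ((1 + K) * ‖z - w‖) := mul_le_mul_of_nonneg_left
          (abs_div_sub_div_mul_le hz hw hwz (apply_nonneg p w) (hpq w)
            (abs_sub_apply_le_of_le_norm p hp z w) (abs_sub_apply_le_of_le_norm q hq z w)) hM0
      _ = (1 + K) * M * ‖z - w‖ := by ring
  calc ‖radialRescale p q z - radialRescale p q w‖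
      = ‖(p z / q z) • (z - w) + (p z / q z - p w / q w) • w‖ := by
        rw [radialRescale, radialRescale, smul_sub, sub_smul]; abel_nf
    _ ≤ K * ‖z - w‖ + (1 + K) * M * ‖z - w‖ := (norm_add_le _ _).trans (add_le_add first second)
    _ = (K + (1 + K) * M) * ‖z - w‖ := by ring

end RadialRescale

namespace EuclideanSpace

variable {ι : Type*} [Fintype ι]

noncomputable def supSeminorm : Seminorm ℝ (EuclideanSpace ℝ ι) :=
  (normSeminorm ℝ (ι → ℝ)).comp (WithLp.linearEquiv 2 ℝ (ι → ℝ)).toLinearMap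

lemma supSeminorm_apply (x : EuclideanSpace ℝ ι) : supSeminorm x = ‖ofLp x‖ := rfl

lemma supSeminorm_eq_iSup_abs (x : EuclideanSpace ℝ ι) : supSeminorm x = ⨆ i, |x i| := by
  rw [supSeminorm_apply, Pi.norm_def, Finset.sup_univ_eq_ciSup, NNReal.coe_iSup]
  simp

lemma supSeminorm_le_norm (x : EuclideanSpace ℝ ι) : supSeminorm x ≤ ‖x‖ := by
  simpa [supSeminorm_apply] using (PiLp.lipschitzWith_ofLp 2 (fun _ : ι => ℝ)).dist_le_mul x 0

lemma norm_le_sqrt_card_mul_supSeminorm (x : EuclideanSpace ℝ ι) :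
    ‖x‖ ≤ √(Fintype.card ι) * supSeminorm x := by
  simpa [supSeminorm_apply, Real.sqrt_eq_rpow] using
    (PiLp.antilipschitzWith_ofLp 2 (fun _ : ι => ℝ)).le_mul_dist x 0

lemma eq_zero_of_supSeminorm_eq_zero {x : EuclideanSpace ℝ ι} (hx : supSeminorm x = 0) :
    x = 0 :=
  norm_le_zero_iff.mp <| by simpa [hx] using norm_le_sqrt_card_mul_supSeminorm x

noncomputable def cubeToBall : EuclideanSpace ℝ ι → EuclideanSpace ℝ ι :=
  radialRescale supSeminorm (normSeminorm ℝ _)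

lemma norm_cubeToBall_sub_le (x y : EuclideanSpace ℝ ι) :
    ‖cubeToBall x - cubeToBall y‖ ≤ 3 * ‖x - y‖ := by
  have h := norm_radialRescale_sub_le supSeminorm (normSeminorm ℝ _) (K := 1) (M := 1)
    supSeminorm_le_norm (fun _ => le_rfl) (by simpa using supSeminorm_le_norm) (by simp)
    zero_le_one x y
  norm_num at h
  exact h

lemma norm_sub_le_mul_norm_cubeToBall_sub (x y : EuclideanSpace ℝ ι) :
    ‖x - y‖ ≤ 3 * (Fintype.card ι + 1) * ‖cubeToBall x - cubeToBall y‖ := by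
  set n : ℕ := Fintype.card ι
  have hinv (z : EuclideanSpace ℝ ι) :
      radialRescale (normSeminorm ℝ _) supSeminorm (cubeToBall z) = z :=
    radialRescale_radialRescale _ _ (fun _ => eq_zero_of_supSeminorm_eq_zero)
      (fun _ h => by simpa using h) z
  have hlip := norm_radialRescale_sub_le (normSeminorm ℝ _) supSeminorm (fun _ => le_rfl)
    supSeminorm_le_norm norm_le_sqrt_card_mul_supSeminorm norm_le_sqrt_card_mul_supSeminorm
    (Real.sqrt_nonneg n) (cubeToBall x) (cubeToBall y)
  rw [hinv, hinv] at hlip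
  have hconst : √n + (1 + √n) * √n ≤ 3 * (n + 1) := by
    nlinarith [Real.sq_sqrt n.cast_nonneg, sq_nonneg (√n - 1)]
  exact hlip.trans (by gcongr)

end EuclideanSpace

open EuclideanSpace in
theorem cube_to_ball_map_biLipschitz_general
    (n : ℕ)
    (lam : EuclideanSpace ℝ (Fin n) → EuclideanSpace ℝ (Fin n))
    (hlam0 : lam 0 = 0)
    (hlam : ∀ x : EuclideanSpace ℝ (Fin n), x ≠ 0 → lam x = ((⨆ i, |x i|) / ‖x‖) • x) :
    ∀ x ∈ {x : EuclideanSpace ℝ (Fin n) | ∀ i, |x i| ≤ 1},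
      ∀ y ∈ {x : EuclideanSpace ℝ (Fin n) | ∀ i, |x i| ≤ 1},
        (1 / (3 * (n + 1) : ℝ)) * ‖x - y‖ ≤ ‖lam x - lam y‖ ∧
        ‖lam x - lam y‖ ≤ 3 * ‖x - y‖ := by
  have hlam_eq : lam = cubeToBall := by
    funext x
    rcases eq_or_ne x 0 with rfl | hx
    · simp [hlam0, cubeToBall, radialRescale]
    · rw [hlam x hx, cubeToBall, radialRescale, supSeminorm_eq_iSup_abs, coe_normSeminorm]
  subst hlam_eq
  intro x _ y _
  refine ⟨?_, norm_cubeToBall_sub_le x y⟩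
  rw [one_div_mul_eq_div, div_le_iff₀' (by positivity)]
  simpa using norm_sub_le_mul_norm_cubeToBall_sub x y

theorem cube_to_ball_map_biLipschitz
    (n : ℕ) (hn : 1 ≤ n)
    (lam : EuclideanSpace ℝ (Fin n) → EuclideanSpace ℝ (Fin n))
    (hlam0 : lam 0 = 0)
    (hlam : ∀ x : EuclideanSpace ℝ (Fin n), x ≠ 0 → lam x = ((⨆ i, |x i|) / ‖x‖) • x) :
    ∀ x ∈ {x : EuclideanSpace ℝ (Fin n) | ∀ i, |x i| ≤ 1},
      ∀ y ∈ {x : EuclideanSpace ℝ (Fin n) | ∀ i, |x i| ≤ 1},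
        (1 / (3 * (n + 1) : ℝ)) * ‖x - y‖ ≤ ‖lam x - lam y‖ ∧
        ‖lam x - lam y‖ ≤ 3 * ‖x - y‖ :=
  cube_to_ball_map_biLipschitz_general n lam hlam0 hlam
end
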